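/- arXiv:1608.03488 — 4 statements merged into one kernel-verified Lean document; each statement's English description precedes it below -/
import Mathlib

section
/- Let P > 0 and let λ, k, γ, ν, Ĉ, D̂ be real numbers. Suppose u : ℝ → ℝ is twice continuously differentiable, periodic with period 2P, and satisfies for all θ ∈ ℝ both λk²u''(θ) = (γ/3)u(θ)³ − (ν/2)u(θ)² + Ĉ and (λk²/2)u'(θ)² = (γ/12)u(θ)⁴ − (ν/6)u(θ)³ + Ĉu(θ) + D̂. Then 3γ⟨u⁴⟩ = 5ν⟨u³⟩ − 18Ĉ⟨u⟩ − 12D̂, where ⟨f⟩ = (1/(2P))∫₀^{2P} f(θ)dθ. -/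
/-!
Multiplying the equation for `u''` by `u` and adding twice the first integral gives
`λk² (u u')' = (γ/2) u⁴ - (5ν/6) u³ + 3Ĉ u + 2D̂`. The left side is the derivative of a
`2P`-periodic function, so it has zero mean, and taking means of the right side is the identity.
-/

open intervalIntegral

theorem Function.Periodic.deriv {f : ℝ → ℝ} {T : ℝ} (hf : Function.Periodic f T) :
    Function.Periodic (deriv f) T := fun x => by
  rw [← deriv_comp_add_const, show (fun y => f (y + T)) = f from funext hf]

theorem Function.Periodic.integral_eq_zero_of_hasDerivAt {f f' : ℝ → ℝ} {T : ℝ}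
    (hf : Function.Periodic f T) (hderiv : ∀ x, HasDerivAt f (f' x) x) (hcont : Continuous f') :
    ∫ x in (0 : ℝ)..T, f' x = 0 := by
  rw [integral_eq_sub_of_hasDerivAt (fun x _ => hderiv x) (hcont.intervalIntegrable _ _),
    ← zero_add T, hf 0, sub_self]

theorem integral_deriv_sq_add_mul_deriv_deriv_eq_zero_of_periodic {u : ℝ → ℝ} {T : ℝ}
    (hu : ContDiff ℝ 2 u) (hper : Function.Periodic u T) :
    ∫ x in (0 : ℝ)..T, (deriv u x ^ 2 + u x * deriv (deriv u) x) = 0 := by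
  obtain ⟨hu_diff, -, hu'⟩ := contDiff_succ_iff_deriv.mp (show ContDiff ℝ (1 + 1) u from hu)
  have hu'_diff : Differentiable ℝ (deriv u) := hu'.differentiable one_ne_zero
  refine (hper.mul hper.deriv).integral_eq_zero_of_hasDerivAt (fun x => ?_)
    ((hu'.continuous.pow 2).add (hu.continuous.mul (hu'.continuous_deriv le_rfl)))
  simpa only [sq] using (hu_diff x).hasDerivAt.mul (hu'_diff x).hasDerivAt

/-- `3γ⟨u⁴⟩ = 5ν⟨u³⟩ - 18Ĉ⟨u⟩ - 12D̂` for a 2P-periodic solution of the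
once-integrated steady Gardner equation and its first integral. -/
theorem mean_identity_u4
    (P lam k γ ν C D : ℝ) (hP : 0 < P)
    (u : ℝ → ℝ) (hu : ContDiff ℝ 2 u)
    (hper : Function.Periodic u (2 * P))
    (heq1 : ∀ θ : ℝ, lam * k ^ 2 * iteratedDeriv 2 u θ
      = (γ / 3) * (u θ) ^ 3 - (ν / 2) * (u θ) ^ 2 + C)
    (heq2 : ∀ θ : ℝ, (lam * k ^ 2 / 2) * (deriv u θ) ^ 2
      = (γ / 12) * (u θ) ^ 4 - (ν / 6) * (u θ) ^ 3 + C * u θ + D) :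
    3 * γ * ((1 / (2 * P)) * ∫ θ in (0:ℝ)..(2 * P), (u θ) ^ 4)
      = 5 * ν * ((1 / (2 * P)) * ∫ θ in (0:ℝ)..(2 * P), (u θ) ^ 3)
        - 18 * C * ((1 / (2 * P)) * ∫ θ in (0:ℝ)..(2 * P), u θ)
        - 12 * D := by
  have hpointwise : ∀ θ, (γ / 2) * u θ ^ 4 - (5 * ν / 6) * u θ ^ 3 + 3 * C * u θ + 2 * D
      = lam * k ^ 2 * (deriv u θ ^ 2 + u θ * deriv (deriv u) θ) := fun θ => by
    have h1 := heq1 θ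
    rw [iteratedDeriv_succ, iteratedDeriv_one] at h1
    linear_combination -(2 * heq2 θ + u θ * h1)
  have hzero : ∫ θ in (0:ℝ)..(2 * P),
      ((γ / 2) * u θ ^ 4 - (5 * ν / 6) * u θ ^ 3 + 3 * C * u θ + 2 * D) = 0 := by
    simp only [hpointwise, integral_const_mul,
      integral_deriv_sq_add_mul_deriv_deriv_eq_zero_of_periodic hu hper, mul_zero]
  have hint : ∀ f : ℝ → ℝ, Continuous f → IntervalIntegrable f MeasureTheory.volume 0 (2 * P) :=
    fun f hf => hf.intervalIntegrable _ _
  have hcont := hu.continuous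
  rw [integral_add (hint _ (by fun_prop)) (hint _ (by fun_prop)),
    integral_add (hint _ (by fun_prop)) (hint _ (by fun_prop)),
    integral_sub (hint _ (by fun_prop)) (hint _ (by fun_prop))] at hzero
  simp only [integral_const_mul, integral_const, sub_zero, smul_eq_mul] at hzero
  field_simp
  linear_combination 6 * hzero
end

section
/- Let P > 0 and let λ, k, γ, ν, Ĉ, D̂ be real numbers with γ ≠ 0 and λk² ≠ 0. Suppose u : ℝ → ℝ is twice continuously differentiable, periodic with period 2P, and satisfies for all θ ∈ ℝ both λk²u''(θ) = (γ/3)u(θ)³ − (ν/2)u(θ)² + Ĉ and (λk²/2)u'(θ)² = (γ/12)u(θ)⁴ − (ν/6)u(θ)³ + Ĉu(θ) + D̂. Let α₁ = ⟨u⟩ and α₂ = ⟨u²⟩. Then ⟨(u')²⟩ = (1/(λk²)) ( −(ν²/(12γ))α₂ + (α₁ + ν/(6γ))Ĉ + (4/3)D̂ ), where ⟨f⟩ = (1/(2P))∫₀^{2P} f(θ)dθ. -/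
/-- Evaluation of `⟨(u')²⟩` (the integral `Ĩ₁`) in terms of `α₁ = ⟨u⟩`,
`α₂ = ⟨u²⟩` and the integration constants of the steady Gardner equation. -/
theorem moment_I1
    (P lam k γ ν C D : ℝ) (hP : 0 < P) (hγ : γ ≠ 0) (hlk : lam * k ^ 2 ≠ 0)
    (u : ℝ → ℝ) (hu : ContDiff ℝ 2 u)
    (hper : Function.Periodic u (2 * P))
    (heq1 : ∀ θ : ℝ, lam * k ^ 2 * iteratedDeriv 2 u θ
      = (γ / 3) * (u θ) ^ 3 - (ν / 2) * (u θ) ^ 2 + C)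
    (heq2 : ∀ θ : ℝ, (lam * k ^ 2 / 2) * (deriv u θ) ^ 2
      = (γ / 12) * (u θ) ^ 4 - (ν / 6) * (u θ) ^ 3 + C * u θ + D)
    (α₁ α₂ : ℝ)
    (hα₁ : α₁ = (1 / (2 * P)) * ∫ θ in (0:ℝ)..(2 * P), u θ)
    (hα₂ : α₂ = (1 / (2 * P)) * ∫ θ in (0:ℝ)..(2 * P), (u θ) ^ 2) :
    (1 / (2 * P)) * ∫ θ in (0:ℝ)..(2 * P), (deriv u θ) ^ 2
      = (1 / (lam * k ^ 2)) *
          (-(ν ^ 2 / (12 * γ)) * α₂ + (α₁ + ν / (6 * γ)) * C + (4 / 3) * D) := by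
  have hl : lam ≠ 0 := left_ne_zero_of_mul hlk
  have hk : k ≠ 0 := fun h => hlk (by rw [h]; ring)
  have hc : Continuous u := hu.continuous
  have hdc : Continuous (deriv u) := hu.continuous_deriv (by norm_num)
  have hddc : Continuous (iteratedDeriv 2 u) := hu.continuous_iteratedDeriv 2 le_rfl
  have hdiff : Differentiable ℝ u := hu.differentiable (by norm_num)
  have hdud : Differentiable ℝ (deriv u) := by
    have := (contDiff_succ_iff_deriv (n := 1)).mp (by exact_mod_cast hu)
    exact this.2.2.differentiable one_ne_zero
  have hit2 : ∀ x, iteratedDeriv 2 u x = deriv (deriv u) x := by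
    intro x
    rw [show (2:ℕ) = 1 + 1 from rfl, iteratedDeriv_succ, iteratedDeriv_one]
  -- periodicity of deriv u
  have hperd : Function.Periodic (deriv u) (2 * P) := by
    intro x
    have : (fun y => u (y + 2 * P)) = u := funext fun y => hper y
    calc deriv u (x + 2 * P) = deriv (fun y => u (y + 2 * P)) x := by
          rw [deriv_comp_add_const]
      _ = deriv u x := by rw [this]
  -- abbreviations for the integrals
  set I1 := ∫ θ in (0:ℝ)..(2 * P), u θ with hI1
  set I2 := ∫ θ in (0:ℝ)..(2 * P), (u θ) ^ 2 with hI2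
  set I3 := ∫ θ in (0:ℝ)..(2 * P), (u θ) ^ 3 with hI3
  set I4 := ∫ θ in (0:ℝ)..(2 * P), (u θ) ^ 4 with hI4
  set J := ∫ θ in (0:ℝ)..(2 * P), (deriv u θ) ^ 2 with hJ
  have int1 : IntervalIntegrable u MeasureTheory.volume 0 (2 * P) :=
    hc.intervalIntegrable _ _
  have int2 : IntervalIntegrable (fun θ => (u θ) ^ 2) MeasureTheory.volume 0 (2 * P) :=
    (hc.pow 2).intervalIntegrable _ _
  have int3 : IntervalIntegrable (fun θ => (u θ) ^ 3) MeasureTheory.volume 0 (2 * P) :=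
    (hc.pow 3).intervalIntegrable _ _
  have int4 : IntervalIntegrable (fun θ => (u θ) ^ 4) MeasureTheory.volume 0 (2 * P) :=
    (hc.pow 4).intervalIntegrable _ _
  have intJ : IntervalIntegrable (fun θ => (deriv u θ) ^ 2) MeasureTheory.volume 0 (2 * P) :=
    (hdc.pow 2).intervalIntegrable _ _
  -- Equation A : integrate heq1
  have EA : (γ / 3) * I3 - (ν / 2) * I2 + C * (2 * P) = 0 := by
    have hFD : ∀ x ∈ Set.uIcc (0:ℝ) (2 * P), HasDerivAt (deriv u) (iteratedDeriv 2 u x) x := by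
      intro x _
      rw [hit2 x]
      exact (hdud x).hasDerivAt
    have hint : IntervalIntegrable (iteratedDeriv 2 u) MeasureTheory.volume 0 (2 * P) :=
      hddc.intervalIntegrable _ _
    have h0 : ∫ θ in (0:ℝ)..(2 * P), iteratedDeriv 2 u θ = deriv u (2 * P) - deriv u 0 :=
      intervalIntegral.integral_eq_sub_of_hasDerivAt hFD hint
    have hz : deriv u (2 * P) - deriv u 0 = 0 := by
      have := hperd 0; rw [zero_add] at this; rw [this]; ring
    have hcongr : ∫ θ in (0:ℝ)..(2 * P), iteratedDeriv 2 u θ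
        = ∫ θ in (0:ℝ)..(2 * P), ((γ / 3) * (u θ) ^ 3 - (ν / 2) * (u θ) ^ 2 + C) / (lam * k ^ 2) := by
      apply intervalIntegral.integral_congr
      intro x _
      have := heq1 x
      field_simp
      linarith [heq1 x]
    have hsplit : ∫ θ in (0:ℝ)..(2 * P),
        ((γ / 3) * (u θ) ^ 3 - (ν / 2) * (u θ) ^ 2 + C) / (lam * k ^ 2)
        = ((γ / 3) * I3 - (ν / 2) * I2 + C * (2 * P)) / (lam * k ^ 2) := by
      have : ∀ θ : ℝ, ((γ / 3) * (u θ) ^ 3 - (ν / 2) * (u θ) ^ 2 + C) / (lam * k ^ 2)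
          = (γ / 3 / (lam * k ^ 2)) * (u θ) ^ 3 - (ν / 2 / (lam * k ^ 2)) * (u θ) ^ 2
            + C / (lam * k ^ 2) := by intro θ; ring
      simp_rw [this]
      rw [intervalIntegral.integral_add (((int3.const_mul _).sub (int2.const_mul _)))
            intervalIntegrable_const,
          intervalIntegral.integral_sub (int3.const_mul _) (int2.const_mul _),
          intervalIntegral.integral_const_mul, intervalIntegral.integral_const_mul,
          intervalIntegral.integral_const]
      rw [← hI3, ← hI2]
      field_simp
      have e : lam * k ^ 2 * lam⁻¹ * k⁻¹ ^ 2 = 1 := by field_simp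
      linear_combination (12 * C * P) * e
    have : ((γ / 3) * I3 - (ν / 2) * I2 + C * (2 * P)) / (lam * k ^ 2) = 0 := by
      rw [← hsplit, ← hcongr, h0, hz]
    exact (div_eq_zero_iff.mp this).resolve_right hlk
  -- Equation B : integration by parts, lam k² * (-J) = (γ/3) I4 - (ν/2) I3 + C I1
  have EB : lam * k ^ 2 * (-J) = (γ / 3) * I4 - (ν / 2) * I3 + C * I1 := by
    -- ∫ ((deriv u)² + u * u'') = [u * deriv u] = 0
    have hFD : ∀ x ∈ Set.uIcc (0:ℝ) (2 * P),
        HasDerivAt (fun y => u y * deriv u y)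
          ((deriv u x) ^ 2 + u x * iteratedDeriv 2 u x) x := by
      intro x _
      have h1 : HasDerivAt u (deriv u x) x := (hdiff x).hasDerivAt
      have h2 : HasDerivAt (deriv u) (iteratedDeriv 2 u x) x := by
        rw [hit2]; exact (hdud x).hasDerivAt
      have := h1.mul h2
      exact this.congr_deriv (by ring)
    have hintg : IntervalIntegrable (fun x => (deriv u x) ^ 2 + u x * iteratedDeriv 2 u x)
        MeasureTheory.volume 0 (2 * P) :=
      ((hdc.pow 2).add (hc.mul hddc)).intervalIntegrable _ _
    have h0 : ∫ x in (0:ℝ)..(2 * P), ((deriv u x) ^ 2 + u x * iteratedDeriv 2 u x)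
        = u (2 * P) * deriv u (2 * P) - u 0 * deriv u 0 :=
      intervalIntegral.integral_eq_sub_of_hasDerivAt hFD hintg
    have hz : u (2 * P) * deriv u (2 * P) - u 0 * deriv u 0 = 0 := by
      have h1 := hper 0; have h2 := hperd 0
      rw [zero_add] at h1 h2
      rw [h1, h2]; ring
    -- rewrite u x * u'' x using heq1
    have hcongr : ∫ x in (0:ℝ)..(2 * P), u x * iteratedDeriv 2 u x
        = ∫ x in (0:ℝ)..(2 * P),
            ((γ / 3) * (u x) ^ 4 - (ν / 2) * (u x) ^ 3 + C * u x) / (lam * k ^ 2) := by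
      apply intervalIntegral.integral_congr
      intro x _
      have h := heq1 x
      have : u x * (lam * k ^ 2 * iteratedDeriv 2 u x)
          = (γ / 3) * (u x) ^ 4 - (ν / 2) * (u x) ^ 3 + C * u x := by
        rw [h]; ring
      field_simp
      linarith [this]
    have hintuu : IntervalIntegrable (fun x => u x * iteratedDeriv 2 u x)
        MeasureTheory.volume 0 (2 * P) := (hc.mul hddc).intervalIntegrable _ _
    have hsum : J + ∫ x in (0:ℝ)..(2 * P), u x * iteratedDeriv 2 u x = 0 := by
      rw [hJ, ← intervalIntegral.integral_add intJ hintuu, h0, hz]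
    have hsplit : ∫ x in (0:ℝ)..(2 * P),
        ((γ / 3) * (u x) ^ 4 - (ν / 2) * (u x) ^ 3 + C * u x) / (lam * k ^ 2)
        = ((γ / 3) * I4 - (ν / 2) * I3 + C * I1) / (lam * k ^ 2) := by
      have : ∀ x : ℝ, ((γ / 3) * (u x) ^ 4 - (ν / 2) * (u x) ^ 3 + C * u x) / (lam * k ^ 2)
          = (γ / 3 / (lam * k ^ 2)) * (u x) ^ 4 - (ν / 2 / (lam * k ^ 2)) * (u x) ^ 3
            + (C / (lam * k ^ 2)) * u x := by intro x; ring
      simp_rw [this]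
      rw [intervalIntegral.integral_add ((int4.const_mul _).sub (int3.const_mul _))
            (int1.const_mul _),
          intervalIntegral.integral_sub (int4.const_mul _) (int3.const_mul _),
          intervalIntegral.integral_const_mul, intervalIntegral.integral_const_mul,
          intervalIntegral.integral_const_mul]
      rw [← hI4, ← hI3, ← hI1]
      ring
    have hJval : J = -(((γ / 3) * I4 - (ν / 2) * I3 + C * I1) / (lam * k ^ 2)) := by
      rw [← hsplit, ← hcongr]; linarith [hsum]
    rw [hJval]
    field_simp
  -- Equation C : integrate heq2
  have EC : (lam * k ^ 2 / 2) * J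
      = (γ / 12) * I4 - (ν / 6) * I3 + C * I1 + D * (2 * P) := by
    have hcongr : ∫ θ in (0:ℝ)..(2 * P), (lam * k ^ 2 / 2) * (deriv u θ) ^ 2
        = ∫ θ in (0:ℝ)..(2 * P),
            ((γ / 12) * (u θ) ^ 4 - (ν / 6) * (u θ) ^ 3 + C * u θ + D) := by
      apply intervalIntegral.integral_congr
      intro x _
      exact heq2 x
    rw [intervalIntegral.integral_const_mul, ← hJ] at hcongr
    have hsplit : ∫ θ in (0:ℝ)..(2 * P),
        ((γ / 12) * (u θ) ^ 4 - (ν / 6) * (u θ) ^ 3 + C * u θ + D)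
        = (γ / 12) * I4 - (ν / 6) * I3 + C * I1 + D * (2 * P) := by
      rw [intervalIntegral.integral_add
            (((int4.const_mul _).sub (int3.const_mul _)).add (int1.const_mul _))
            intervalIntegrable_const,
          intervalIntegral.integral_add ((int4.const_mul _).sub (int3.const_mul _))
            (int1.const_mul _),
          intervalIntegral.integral_sub (int4.const_mul _) (int3.const_mul _),
          intervalIntegral.integral_const_mul, intervalIntegral.integral_const_mul,
          intervalIntegral.integral_const_mul, intervalIntegral.integral_const]
      rw [← hI4, ← hI3, ← hI1]
      simp only [smul_eq_mul]
      ring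
    rw [hsplit] at hcongr
    exact hcongr
  -- Final algebra
  rw [hα₁, hα₂]
  have hP2 : (2 : ℝ) * P ≠ 0 := by positivity
  field_simp
  linear_combination (-36*ν) * EA + (-72*γ) * EB + (288*γ) * EC
end

section
/- Let P > 0, let λ, k, γ, ν, ω be real numbers with λk² ≠ 0, let g₁ > 0, g₂ ≠ 0, and g₃, g₄, g₅ be real numbers. Suppose u : ℝ → ℝ is four times continuously differentiable, periodic with period 2P, and satisfies λk²u'''(θ) = γu(θ)²u'(θ) − νu(θ)u'(θ) for all θ ∈ ℝ. Define G(θ) = −( (g₃/√g₁)k²u''(θ) + (g₄/√g₁)k⁴u''''(θ) + ω√g₁(g₅/g₂)k² · d²/dθ²((u(θ) − 1/√3)³) ). Then ⟨G·u⟩ = k²⟨(u')²⟩( g₃/√g₁ + √g₁ g₅ ω/g₂ ) + k²⟨u(u')²⟩( −νg₄/(λ√g₁) − 2√3 ω√g₁ g₅/g₂ ) + k²⟨u²(u')²⟩( g₄γ/(√g₁ λ) + 3ω√g₁ g₅/g₂ ), where ⟨f⟩ = (1/(2P))∫₀^{2P} f(θ)dθ. -/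
open intervalIntegral MeasureTheory

private lemma per_deriv' {f : ℝ → ℝ} {c : ℝ} (h : Function.Periodic f c) :
    Function.Periodic (deriv f) c := by
  intro x
  have hf : f = fun y => f (y + c) := funext fun y => (h y).symm
  conv_rhs => rw [hf]
  rw [deriv_comp_add_const]

private lemma per_iter' {f : ℝ → ℝ} {c : ℝ} (h : Function.Periodic f c) (m : ℕ) :
    Function.Periodic (iteratedDeriv m f) c := by
  induction m with
  | zero => simpa [iteratedDeriv_zero] using h
  | succ n ih => rw [iteratedDeriv_succ]; exact per_deriv' ih

private lemma c1_iter' {f : ℝ → ℝ} (hf : ContDiff ℝ 4 f) (m : ℕ) (hm : m < 4) :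
    ContDiff ℝ 1 (iteratedDeriv m f) := by
  rw [contDiff_one_iff_deriv]
  refine ⟨hf.differentiable_iteratedDeriv m (by exact_mod_cast hm), ?_⟩
  rw [← iteratedDeriv_succ]
  exact hf.continuous_iteratedDeriv (m + 1) (by exact_mod_cast hm)

private lemma ibp_per' {T : ℝ} {f g : ℝ → ℝ} (hf : ContDiff ℝ 1 f) (hg : ContDiff ℝ 1 g)
    (hb : f T * g T = f 0 * g 0) :
    ∫ x in (0:ℝ)..T, deriv f x * g x = -∫ x in (0:ℝ)..T, f x * deriv g x := by
  have hdf : Continuous (deriv f) := hf.continuous_deriv le_rfl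
  have hdg : Continuous (deriv g) := hg.continuous_deriv le_rfl
  have h1 : IntervalIntegrable (fun x => deriv f x * g x) volume 0 T :=
    (hdf.mul hg.continuous).intervalIntegrable 0 T
  have h2 : IntervalIntegrable (fun x => f x * deriv g x) volume 0 T :=
    (hf.continuous.mul hdg).intervalIntegrable 0 T
  have key := intervalIntegral.integral_deriv_mul_eq_sub
    (u := f) (v := g) (u' := deriv f) (v' := deriv g)
    (fun x _ => (hf.differentiable one_ne_zero x).hasDerivAt)
    (fun x _ => (hg.differentiable one_ne_zero x).hasDerivAt)
    (hdf.intervalIntegrable 0 T) (hdg.intervalIntegrable 0 T)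
  rw [intervalIntegral.integral_add h1 h2, hb] at key
  linarith

/-- The solvability integral `⟨G·u⟩` of the traffic-model perturbation `G`
expressed through the moment integrals `⟨(u')²⟩`, `⟨u(u')²⟩`, `⟨u²(u')²⟩`. -/
theorem solvability_integral_G
    (P lam k γ ν ω g₁ g₂ g₃ g₄ g₅ : ℝ) (hP : 0 < P)
    (hlk : lam * k ^ 2 ≠ 0) (hg₁ : 0 < g₁) (hg₂ : g₂ ≠ 0)
    (u : ℝ → ℝ) (hu : ContDiff ℝ 4 u)
    (hper : Function.Periodic u (2 * P))
    (heq : ∀ θ : ℝ, lam * k ^ 2 * iteratedDeriv 3 u θ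
      = γ * (u θ) ^ 2 * deriv u θ - ν * u θ * deriv u θ)
    (G : ℝ → ℝ)
    (hG : ∀ θ : ℝ, G θ =
      -((g₃ / Real.sqrt g₁) * k ^ 2 * iteratedDeriv 2 u θ
        + (g₄ / Real.sqrt g₁) * k ^ 4 * iteratedDeriv 4 u θ
        + ω * Real.sqrt g₁ * (g₅ / g₂) * k ^ 2 *
            iteratedDeriv 2 (fun z => (u z - 1 / Real.sqrt 3) ^ 3) θ)) :
    (1 / (2 * P)) * ∫ θ in (0:ℝ)..(2 * P), G θ * u θ
      = k ^ 2 * ((1 / (2 * P)) * ∫ θ in (0:ℝ)..(2 * P), (deriv u θ) ^ 2)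
          * (g₃ / Real.sqrt g₁ + Real.sqrt g₁ * g₅ * ω / g₂)
        + k ^ 2 * ((1 / (2 * P)) * ∫ θ in (0:ℝ)..(2 * P), u θ * (deriv u θ) ^ 2)
          * (-(ν * g₄ / (lam * Real.sqrt g₁))
             - 2 * Real.sqrt 3 * ω * Real.sqrt g₁ * g₅ / g₂)
        + k ^ 2 * ((1 / (2 * P)) *
              ∫ θ in (0:ℝ)..(2 * P), (u θ) ^ 2 * (deriv u θ) ^ 2)
          * (g₄ * γ / (Real.sqrt g₁ * lam) + 3 * ω * Real.sqrt g₁ * g₅ / g₂) := by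
  set T : ℝ := 2 * P with hT
  set w : ℝ → ℝ := fun z => (u z - 1 / Real.sqrt 3) ^ 3 with hw
  have hlam : lam ≠ 0 := fun h => hlk (by simp [h])
  have hk : k ≠ 0 := fun h => hlk (by simp [h])
  have hsg₁ : Real.sqrt g₁ ≠ 0 := (Real.sqrt_pos.mpr hg₁).ne'
  have h3 : Real.sqrt 3 * Real.sqrt 3 = 3 := Real.mul_self_sqrt (by norm_num)
  have hs3 : Real.sqrt 3 ≠ 0 := by positivity
  -- smoothness
  have hu1 : ContDiff ℝ 1 u := hu.of_le (by norm_num)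
  have hcw : ContDiff ℝ 4 w := (hu.sub contDiff_const).pow 3
  have cu : Continuous u := hu.continuous
  have cdu : Continuous (deriv u) := hu.continuous_deriv (by norm_num)
  have cit : ∀ m : ℕ, m ≤ 4 → Continuous (iteratedDeriv m u) := fun m hm =>
    hu.continuous_iteratedDeriv m (by exact_mod_cast hm)
  have citw : Continuous (iteratedDeriv 2 w) :=
    hcw.continuous_iteratedDeriv 2 (by norm_num)
  -- periodicity boundary values
  have hbd : ∀ f : ℝ → ℝ, Function.Periodic f T → f T = f 0 := by
    intro f hf; simpa using hf 0
  have hperT : ∀ m : ℕ, iteratedDeriv m u T = iteratedDeriv m u 0 := fun m =>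
    hbd _ (per_iter' hper m)
  have hperw : Function.Periodic w T := fun x => by simp [hw, hper x]
  have hperwT : ∀ m : ℕ, iteratedDeriv m w T = iteratedDeriv m w 0 := fun m =>
    hbd _ (per_iter' hperw m)
  have huT : u T = u 0 := hbd u hper
  -- derivative of w
  have hdw : ∀ θ, deriv w θ
      = 3 * (u θ - 1 / Real.sqrt 3) ^ 2 * deriv u θ := by
    intro θ
    have h := (((hu.differentiable (by norm_num) θ).hasDerivAt).sub_const
      (1 / Real.sqrt 3)).pow 3
    rw [hw]
    simpa [one_div] using (show HasDerivAt (fun z => (u z - 1 / Real.sqrt 3) ^ 3) _ θ from h).deriv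
  -- E1
  have e1 : ∫ θ in (0:ℝ)..T, iteratedDeriv 2 u θ * u θ
      = -∫ θ in (0:ℝ)..T, (deriv u θ) ^ 2 := by
    have hb : deriv u T * u T = deriv u 0 * u 0 := by
      have := hperT 1; rw [iteratedDeriv_one] at this; rw [this, huT]
    have key := ibp_per' (f := deriv u) (g := u)
      (by have := c1_iter' hu 1 (by norm_num); rwa [iteratedDeriv_one] at this)
      hu1 hb
    have : iteratedDeriv 2 u = deriv (deriv u) := by
      rw [iteratedDeriv_succ, iteratedDeriv_one]
    rw [this, key]
    congr 1
    exact intervalIntegral.integral_congr fun θ _ => (sq (deriv u θ)).symm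
  -- E2
  have e2 : ∫ θ in (0:ℝ)..T, iteratedDeriv 4 u θ * u θ
      = -((γ / (lam * k ^ 2)) * ∫ θ in (0:ℝ)..T, (u θ) ^ 2 * (deriv u θ) ^ 2)
        + (ν / (lam * k ^ 2)) * ∫ θ in (0:ℝ)..T, u θ * (deriv u θ) ^ 2 := by
    have hb : iteratedDeriv 3 u T * u T = iteratedDeriv 3 u 0 * u 0 := by
      rw [hperT 3, huT]
    have key := ibp_per' (f := iteratedDeriv 3 u) (g := u)
      (c1_iter' hu 3 (by norm_num)) hu1 hb
    have h4 : iteratedDeriv 4 u = deriv (iteratedDeriv 3 u) := iteratedDeriv_succ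
    rw [h4, key]
    have hpt : ∀ θ, iteratedDeriv 3 u θ * deriv u θ
        = (γ / (lam * k ^ 2)) * ((u θ) ^ 2 * (deriv u θ) ^ 2)
          - (ν / (lam * k ^ 2)) * (u θ * (deriv u θ) ^ 2) := by
      intro θ
      have h := heq θ
      field_simp
      linear_combination deriv u θ * h
    rw [intervalIntegral.integral_congr (fun θ _ => hpt θ)]
    rw [intervalIntegral.integral_sub
      (f := fun x => γ / (lam * k ^ 2) * (u x ^ 2 * deriv u x ^ 2))
      (g := fun x => ν / (lam * k ^ 2) * (u x * deriv u x ^ 2))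
      ((continuous_const.mul ((cu.pow 2).mul (cdu.pow 2))).intervalIntegrable 0 T)
      ((continuous_const.mul (cu.mul (cdu.pow 2))).intervalIntegrable 0 T),
      intervalIntegral.integral_const_mul, intervalIntegral.integral_const_mul]
    ring
  -- E3
  have e3 : ∫ θ in (0:ℝ)..T, iteratedDeriv 2 w θ * u θ
      = -(3 * ∫ θ in (0:ℝ)..T, (u θ) ^ 2 * (deriv u θ) ^ 2)
        + (2 * Real.sqrt 3) * (∫ θ in (0:ℝ)..T, u θ * (deriv u θ) ^ 2)
        - ∫ θ in (0:ℝ)..T, (deriv u θ) ^ 2 := by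
    have hb : deriv w T * u T = deriv w 0 * u 0 := by
      have := hperwT 1; rw [iteratedDeriv_one] at this; rw [this, huT]
    have key := ibp_per' (f := deriv w) (g := u)
      (by have := c1_iter' hcw 1 (by norm_num); rwa [iteratedDeriv_one] at this)
      hu1 hb
    have h2w : iteratedDeriv 2 w = deriv (deriv w) := by
      rw [iteratedDeriv_succ, iteratedDeriv_one]
    rw [h2w, key]
    have hpt : ∀ θ, deriv w θ * deriv u θ
        = 3 * ((u θ) ^ 2 * (deriv u θ) ^ 2)
          - (2 * Real.sqrt 3) * (u θ * (deriv u θ) ^ 2) + (deriv u θ) ^ 2 := by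
      intro θ
      have hc : (1:ℝ) / Real.sqrt 3 = Real.sqrt 3 / 3 := by
        rw [eq_div_iff (by norm_num : (3:ℝ) ≠ 0), one_div,
          inv_mul_eq_iff_eq_mul₀ hs3]
        linarith [h3]
      rw [hdw θ, hc]
      linear_combination (deriv u θ ^ 2 / 3) * h3
    rw [intervalIntegral.integral_congr (fun θ _ => hpt θ)]
    rw [intervalIntegral.integral_add
      (f := fun x => 3 * (u x ^ 2 * deriv u x ^ 2) - 2 * Real.sqrt 3 * (u x * deriv u x ^ 2))
      (g := fun x => deriv u x ^ 2)
      ((((continuous_const.mul ((cu.pow 2).mul (cdu.pow 2))).sub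
        (continuous_const.mul (cu.mul (cdu.pow 2))))).intervalIntegrable 0 T)
      ((cdu.pow 2).intervalIntegrable 0 T),
      intervalIntegral.integral_sub
      (f := fun x => 3 * (u x ^ 2 * deriv u x ^ 2))
      (g := fun x => 2 * Real.sqrt 3 * (u x * deriv u x ^ 2))
      ((continuous_const.mul ((cu.pow 2).mul (cdu.pow 2))).intervalIntegrable 0 T)
      ((continuous_const.mul (cu.mul (cdu.pow 2))).intervalIntegrable 0 T),
      intervalIntegral.integral_const_mul, intervalIntegral.integral_const_mul]
    ring
  -- combine
  have hGu : ∀ θ, G θ * u θ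
      = (-(g₃ / Real.sqrt g₁ * k ^ 2)) * (iteratedDeriv 2 u θ * u θ)
        + (-(g₄ / Real.sqrt g₁ * k ^ 4)) * (iteratedDeriv 4 u θ * u θ)
        + (-(ω * Real.sqrt g₁ * (g₅ / g₂) * k ^ 2)) * (iteratedDeriv 2 w θ * u θ) := by
    intro θ; rw [hG θ]; ring
  rw [intervalIntegral.integral_congr (fun θ _ => hGu θ)]
  rw [intervalIntegral.integral_add
      (f := fun x => -(g₃ / Real.sqrt g₁ * k ^ 2) * (iteratedDeriv 2 u x * u x)
        + -(g₄ / Real.sqrt g₁ * k ^ 4) * (iteratedDeriv 4 u x * u x))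
      (g := fun x => -(ω * Real.sqrt g₁ * (g₅ / g₂) * k ^ 2) * (iteratedDeriv 2 w x * u x))
      ((((continuous_const.mul ((cit 2 (by norm_num)).mul cu))).add
        ((continuous_const.mul ((cit 4 le_rfl).mul cu)))).intervalIntegrable 0 T)
      ((continuous_const.mul (citw.mul cu)).intervalIntegrable 0 T),
    intervalIntegral.integral_add
      (f := fun x => -(g₃ / Real.sqrt g₁ * k ^ 2) * (iteratedDeriv 2 u x * u x))
      (g := fun x => -(g₄ / Real.sqrt g₁ * k ^ 4) * (iteratedDeriv 4 u x * u x))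
      ((continuous_const.mul ((cit 2 (by norm_num)).mul cu)).intervalIntegrable 0 T)
      ((continuous_const.mul ((cit 4 le_rfl).mul cu)).intervalIntegrable 0 T),
    intervalIntegral.integral_const_mul, intervalIntegral.integral_const_mul,
    intervalIntegral.integral_const_mul, e1, e2, e3]
  have hTne : T ≠ 0 := by positivity
  field_simp
  ring
end

section
/- Let I ⊆ ℝ be an open interval, let γ, ν, Ĉ, D̂ be real constants, and let a, b, c, d : I → ℝ be differentiable functions such that for all X ∈ I and each r ∈ {a, b, c, d}: r(X)·Ĉ + D̂ = (ν/6)r(X)³ − (γ/12)r(X)⁴ and 3r(X)²ν − 2r(X)³γ − 6Ĉ ≠ 0; and such that for all X ∈ I, a(X) − c(X) ≠ 0, b(X) − d(X) ≠ 0, and ((a(X) − d(X))(b(X) − c(X)))/((a(X) − c(X))(b(X) − d(X))) ≥ 0. Define m : I → ℝ by m(X) = √( ((a(X) − d(X))(b(X) − c(X))) / ((a(X) − c(X))(b(X) − d(X))) ). Then m is constant on I. -/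
/-!
Each root `r` of the quartic satisfies `P (r X) = 0` for the fixed polynomial
`P = (γ/12) Q`, and the nondegeneracy hypothesis says `-6 P' (r X) ≠ 0`. Differentiating
`P ∘ r = 0` gives `P' (r X) · r' X = 0`, hence `r' = 0`, so every root is constant on the
interval, and so is `m`, which is a function of the four roots.
-/

open Filter Topology

section ConstantComposition

variable {𝕜 : Type*} [RCLike 𝕜] {f f' r : 𝕜 → 𝕜}

theorem deriv_eq_zero_of_comp_eventuallyEq_const {x k : 𝕜}
    (hf : HasDerivAt f (f' (r x)) (r x)) (hf' : f' (r x) ≠ 0) (hr : DifferentiableAt 𝕜 r x)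
    (hfr : f ∘ r =ᶠ[𝓝 x] fun _ => k) : deriv r x = 0 := by
  have hcomp : HasDerivAt (f ∘ r) (f' (r x) * deriv r x) x := hf.comp x hr.hasDerivAt
  have hconst : HasDerivAt (f ∘ r) 0 x := hfr.hasDerivAt_iff.mpr (hasDerivAt_const x k)
  exact (mul_eq_zero.mp (hcomp.unique hconst)).resolve_left hf'

theorem IsOpen.is_const_of_comp_eq_const {s : Set 𝕜} (hs : IsOpen s) (hs' : IsPreconnected s)
    {k : 𝕜} (hf : ∀ z, HasDerivAt f (f' z) z) (hf' : ∀ x ∈ s, f' (r x) ≠ 0)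
    (hr : DifferentiableOn 𝕜 r s) (hfr : ∀ x ∈ s, f (r x) = k) {x y : 𝕜}
    (hx : x ∈ s) (hy : y ∈ s) : r x = r y := by
  refine hs.is_const_of_deriv_eq_zero hs' hr (fun z hz => ?_) hx hy
  refine deriv_eq_zero_of_comp_eventuallyEq_const (k := k) (hf _) (hf' z hz)
    (hr.differentiableAt (hs.mem_nhds hz)) ?_
  filter_upwards [hs.mem_nhds hz] with w hw using hfr w hw

end ConstantComposition

/-- `(γ/12) Q`, with `Q` the quartic of the modulation theory; scaling by `γ/12` avoids
dividing by `γ`. -/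
noncomputable def modulationQuartic (γ ν C D z : ℝ) : ℝ :=
  γ / 12 * z ^ 4 - ν / 6 * z ^ 3 + C * z + D

theorem hasDerivAt_modulationQuartic (γ ν C D z : ℝ) :
    HasDerivAt (modulationQuartic γ ν C D) (γ / 3 * z ^ 3 - ν / 2 * z ^ 2 + C) z := by
  refine ((((hasDerivAt_pow 4 z).const_mul (γ / 12)).sub
    ((hasDerivAt_pow 3 z).const_mul (ν / 6))).add ((hasDerivAt_id' z).const_mul C)).add_const D
    |>.congr_deriv ?_
  push_cast
  ring

theorem modulus_is_constant_general
    (I : Set ℝ) (hI : IsOpen I) (hI' : I.OrdConnected)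
    (γ ν C D : ℝ) (a b c d : ℝ → ℝ)
    (ha : ∀ X ∈ I, DifferentiableAt ℝ a X)
    (hb : ∀ X ∈ I, DifferentiableAt ℝ b X)
    (hc : ∀ X ∈ I, DifferentiableAt ℝ c X)
    (hd : ∀ X ∈ I, DifferentiableAt ℝ d X)
    (heq : ∀ X ∈ I, ∀ r ∈ ({a, b, c, d} : Set (ℝ → ℝ)),
      r X * C + D = (ν / 6) * (r X) ^ 3 - (γ / 12) * (r X) ^ 4)
    (hnd : ∀ X ∈ I, ∀ r ∈ ({a, b, c, d} : Set (ℝ → ℝ)),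
      3 * (r X) ^ 2 * ν - 2 * (r X) ^ 3 * γ - 6 * C ≠ 0)
    (m : ℝ → ℝ)
    (hm : ∀ X, m X = Real.sqrt
      (((a X - d X) * (b X - c X)) / ((a X - c X) * (b X - d X)))) :
    ∀ X ∈ I, ∀ Y ∈ I, m X = m Y := by
  have root_const : ∀ r ∈ ({a, b, c, d} : Set (ℝ → ℝ)),
      (∀ X ∈ I, DifferentiableAt ℝ r X) → ∀ X ∈ I, ∀ Y ∈ I, r X = r Y :=
    fun r hr hdiff X hX Y hY =>
      hI.is_const_of_comp_eq_const hI'.isPreconnected (k := 0)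
        (hasDerivAt_modulationQuartic γ ν C D)
        (fun x hx h => hnd x hx r hr (by linear_combination -6 * h))
        (fun x hx => (hdiff x hx).differentiableWithinAt)
        (fun x hx => by unfold modulationQuartic; linear_combination heq x hx r hr) hX hY
  intro X hX Y hY
  rw [hm X, hm Y, root_const a (by simp) ha X hX Y hY, root_const b (by simp) hb X hX Y hY,
    root_const c (by simp) hc X hX Y hY, root_const d (by simp) hd X hX Y hY]

/-- At a fixed point of the modulation equations, where the integration
constants `Ĉ, D̂` are constant, the elliptic modulus
`m = √((a-d)(b-c)/((a-c)(b-d)))` is constant on the interval. -/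
theorem modulus_is_constant
    (I : Set ℝ) (hI : IsOpen I) (hI' : I.OrdConnected)
    (γ ν C D : ℝ) (a b c d : ℝ → ℝ)
    (ha : ∀ X ∈ I, DifferentiableAt ℝ a X)
    (hb : ∀ X ∈ I, DifferentiableAt ℝ b X)
    (hc : ∀ X ∈ I, DifferentiableAt ℝ c X)
    (hd : ∀ X ∈ I, DifferentiableAt ℝ d X)
    (heq : ∀ X ∈ I, ∀ r ∈ ({a, b, c, d} : Set (ℝ → ℝ)),
      r X * C + D = (ν / 6) * (r X) ^ 3 - (γ / 12) * (r X) ^ 4)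
    (hnd : ∀ X ∈ I, ∀ r ∈ ({a, b, c, d} : Set (ℝ → ℝ)),
      3 * (r X) ^ 2 * ν - 2 * (r X) ^ 3 * γ - 6 * C ≠ 0)
    (hac : ∀ X ∈ I, a X - c X ≠ 0)
    (hbd : ∀ X ∈ I, b X - d X ≠ 0)
    (hratio : ∀ X ∈ I,
      0 ≤ ((a X - d X) * (b X - c X)) / ((a X - c X) * (b X - d X)))
    (m : ℝ → ℝ)
    (hm : ∀ X, m X = Real.sqrt
      (((a X - d X) * (b X - c X)) / ((a X - c X) * (b X - d X)))) :
    ∀ X ∈ I, ∀ Y ∈ I, m X = m Y :=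
  modulus_is_constant_general I hI hI' γ ν C D a b c d ha hb hc hd heq hnd m hm
end
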